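/- Order interleaving of left and right q-deformed rationals: for every real q with 0 < q < 1 and all rational numbers x < y, one has [x]♭_q < [x]♯_q < [y]♭_q < [y]♯_q. In particular, x ↦ [x]♯_q and x ↦ [x]♭_q are strictly increasing on ℚ, and for each rational x the left q-deformation is strictly smaller than the right q-deformation. -/

import Mathlib

open Matrix Filter

/-- The q-deformed generator σ₁(q) = [[q⁻¹, −q⁻¹], [0, 1]]. -/
noncomputable def sig1 (q : ℝ) : Matrix (Fin 2) (Fin 2) ℝ := !![q⁻¹, -q⁻¹; 0, 1]

/-- The q-deformed generator σ₂(q) = [[1, 0], [1, q⁻¹]]. -/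
noncomputable def sig2 (q : ℝ) : Matrix (Fin 2) (Fin 2) ℝ := !![1, 0; 1, q⁻¹]

/-- `betaMat q a k` is the product of the first `k` alternating factors
`σ₁(q)^{-a 1} · σ₂(q)^{a 2} · σ₁(q)^{-a 3} ⋯` (indices start at 1). -/
noncomputable def betaMat (q : ℝ) (a : ℕ → ℤ) : ℕ → Matrix (Fin 2) (Fin 2) ℝ
  | 0 => 1
  | k + 1 => betaMat q a k *
      (if (k + 1) % 2 = 1 then sig1 q ^ (-(a (k + 1))) else sig2 q ^ (a (k + 1)))

/-- Möbius action of a 2×2 real matrix on a real number: z ↦ (Az + B)/(Cz + D). -/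
noncomputable def mobiusAct (M : Matrix (Fin 2) (Fin 2) ℝ) (z : ℝ) : ℝ :=
  (M 0 0 * z + M 0 1) / (M 1 0 * z + M 1 1)

/-- Möbius image of ∞ under a 2×2 real matrix: ∞ ↦ A/C. -/
noncomputable def mobiusInf (M : Matrix (Fin 2) (Fin 2) ℝ) : ℝ := M 0 0 / M 1 0

/-- `a` (on indices 1,…,2n) is an even continued form: either `a₁ ≥ 0` and `aᵢ ≥ 1` for
`2 ≤ i ≤ 2n`, or `a₁ ≤ 0` and `aᵢ ≤ −1` for `2 ≤ i ≤ 2n`. -/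
def IsEvenForm (n : ℕ) (a : ℕ → ℤ) : Prop :=
  1 ≤ n ∧ ((0 ≤ a 1 ∧ ∀ i, 2 ≤ i → i ≤ 2 * n → 1 ≤ a i)
    ∨ (a 1 ≤ 0 ∧ ∀ i, 2 ≤ i → i ≤ 2 * n → a i ≤ -1))

/-- Value of the continued fraction `a i + 1/(a (i+1) + 1/(⋯ + 1/(a last)))`. -/
def cfVal (a : ℕ → ℤ) (last i : ℕ) : ℚ :=
  if last ≤ i then (a i : ℚ)
  else (a i : ℚ) + 1 / cfVal a last (i + 1)
termination_by last - i
decreasing_by omega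

/-- `a` (on indices 1,…,2n) is the even continued fraction expansion of the rational `x`:
for `x ≠ 0` it is an even continued form of value `x`; by convention the expansion of `0`
is `(−1, 1)`. -/
def IsECFExp (n : ℕ) (a : ℕ → ℤ) (x : ℚ) : Prop :=
  (x ≠ 0 ∧ IsEvenForm n a ∧ cfVal a (2 * n) 1 = x) ∨
  (x = 0 ∧ n = 1 ∧ a 1 = -1 ∧ a 2 = 1)

/-- The right q-deformation attached to expansion data `(n, a)`:
the image of ∞ under the Möbius transformation of β(a, q). -/
noncomputable def sharpVal (q : ℝ) (n : ℕ) (a : ℕ → ℤ) : ℝ :=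
  mobiusInf (betaMat q a (2 * n))

/-- The left q-deformation attached to expansion data `(n, a)`:
the image of 1/(1−q) under the Möbius transformation of β(a, q). -/
noncomputable def flatVal (q : ℝ) (n : ℕ) (a : ℕ → ℤ) : ℝ :=
  mobiusAct (betaMat q a (2 * n)) (1 / (1 - q))

/-!
For a positive even continued fraction `(a₁, …, a₂ₙ)` the matrix β(a, q) is the product of the
word `R^{a₁} L^{a₂} ⋯ R^{a₂ₙ₋₁} L^{a₂ₙ}` in `R = σ₁(q)⁻¹ : z ↦ qz + 1` and
`L = σ₂(q) : z ↦ qz/(qz + 1)`; for a negative one it is the word in the inverse matrices.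
All letters preserve the orientation of the projective line and `R` fixes both `∞` and
`1/(1-q)`. In the positive case `L` maps `[0, ∞]` into `[0, 1]` and `R` maps it into `[1, ∞]`,
so the intervals `[[x]♭, [x]♯] = β([1/(1-q), ∞])` are ordered like the words, compared
lexicographically with `L < R` after padding them with `R`s. At `q = 1` both endpoints collapse
to `x`, so the same comparison shows that this lexicographic order is the order of the rationals.
Negative rationals behave in the same way with the order of the words reversed, and
`[0]♭ = -(1-q)/q`, `[0]♯ = 0` separate the negative rationals from the positive ones.
-/

namespace QDeform

inductive Letter | R | L

open Letter Set

variable {q : ℝ}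

/-- `posLetter q R = σ₁(q)⁻¹` and `posLetter q L = σ₂(q)`; `negLetter q c` is the inverse of
`posLetter q c`. -/
noncomputable def posLetter (q : ℝ) : Letter → Matrix (Fin 2) (Fin 2) ℝ
  | R => !![q, 1; 0, 1]
  | L => !![1, 0; 1, q⁻¹]

noncomputable def negLetter (q : ℝ) : Letter → Matrix (Fin 2) (Fin 2) ℝ
  | R => !![q⁻¹, -q⁻¹; 0, 1]
  | L => !![1, 0; -q, q]

section Letters

variable (q) (v : Fin 2 → ℝ)

lemma posLetter_R_mulVec : posLetter q R *ᵥ v = ![q * v 0 + v 1, v 1] := by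
  ext i; fin_cases i <;> simp [posLetter, mulVec, dotProduct]

lemma posLetter_L_mulVec : posLetter q L *ᵥ v = ![v 0, v 0 + q⁻¹ * v 1] := by
  ext i; fin_cases i <;> simp [posLetter, mulVec, dotProduct]

lemma negLetter_R_mulVec : negLetter q R *ᵥ v = ![q⁻¹ * (v 0 - v 1), v 1] := by
  ext i; fin_cases i <;> simp [negLetter, mulVec, dotProduct, sub_eq_add_neg, mul_add]

lemma negLetter_L_mulVec : negLetter q L *ᵥ v = ![v 0, q * (v 1 - v 0)] := by
  ext i; fin_cases i <;> simp [negLetter, mulVec, dotProduct, sub_eq_add_neg, mul_add, add_comm]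

lemma posLetter_one_R_pow_mulVec (s : ℕ) : posLetter 1 R ^ s *ᵥ v = ![v 0 + s * v 1, v 1] := by
  induction s with
  | zero => ext i; fin_cases i <;> simp
  | succ s ih =>
    rw [pow_succ', ← mulVec_mulVec, ih, posLetter_R_mulVec]
    ext i; fin_cases i <;> simp [add_mul, add_assoc]

lemma posLetter_one_L_pow_mulVec (s : ℕ) : posLetter 1 L ^ s *ᵥ v = ![v 0, s * v 0 + v 1] := by
  induction s with
  | zero => ext i; fin_cases i <;> simp
  | succ s ih =>
    rw [pow_succ', ← mulVec_mulVec, ih, posLetter_L_mulVec]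
    ext i; fin_cases i <;> simp [add_mul, add_comm, add_assoc]

variable {q}

lemma det_posLetter_pos (hq : 0 < q) (c : Letter) : 0 < (posLetter q c).det := by
  cases c <;> simp [posLetter, det_fin_two_of, hq]

lemma det_negLetter_pos (hq : 0 < q) (c : Letter) : 0 < (negLetter q c).det := by
  cases c <;> simp [negLetter, det_fin_two_of, hq]

lemma inv_sig1 (hq : q ≠ 0) : (sig1 q)⁻¹ = posLetter q R :=
  inv_eq_right_inv (by simp [sig1, posLetter, one_fin_two, hq])

lemma inv_sig2 (hq : q ≠ 0) : (sig2 q)⁻¹ = negLetter q L :=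
  inv_eq_right_inv (by simp [sig2, negLetter, one_fin_two, hq])

end Letters

def wedge (v w : Fin 2 → ℝ) : ℝ := v 0 * w 1 - v 1 * w 0

/-- Affine coordinate of the line spanned by `v`; Lean's division makes it `0` at `∞`. -/
noncomputable def ratio (v : Fin 2 → ℝ) : ℝ := v 0 / v 1

lemma wedge_mulVec (M : Matrix (Fin 2) (Fin 2) ℝ) (v w : Fin 2 → ℝ) :
    wedge (M *ᵥ v) (M *ᵥ w) = M.det * wedge v w := by
  simp only [wedge, mulVec, dotProduct, Fin.sum_univ_two, det_fin_two]
  ring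

lemma ratio_lt_ratio_of_wedge_neg {v w : Fin 2 → ℝ} (h : 0 < v 1 * w 1) (hvw : wedge v w < 0) :
    ratio v < ratio w := by
  have hv : v 1 ≠ 0 := left_ne_zero_of_mul h.ne'
  have hw : w 1 ≠ 0 := right_ne_zero_of_mul h.ne'
  have : ratio v - ratio w = wedge v w / (v 1 * w 1) := by
    rw [ratio, ratio, div_sub_div _ _ hv hw, wedge]
  linarith [div_neg_of_neg_of_pos hvw h]

lemma mobiusInf_eq_ratio (M : Matrix (Fin 2) (Fin 2) ℝ) : mobiusInf M = ratio (M *ᵥ ![1, 0]) := by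
  simp [mobiusInf, ratio, mulVec, dotProduct]

lemma mobiusAct_div_eq_ratio (M : Matrix (Fin 2) (Fin 2) ℝ) (x : ℝ) {y : ℝ} (hy : y ≠ 0) :
    mobiusAct M (x / y) = ratio (M *ᵥ ![x, y]) := by
  have h (a b : ℝ) : a * (x / y) + b = (a * x + b * y) / y := by field_simp
  simp [mobiusAct, ratio, mulVec, dotProduct, h, div_div_div_cancel_right₀ hy]

lemma ratio_posLetter_one_R_pow (s : ℕ) {v : Fin 2 → ℝ} (hv : v 1 ≠ 0) :
    ratio (posLetter 1 R ^ s *ᵥ v) = s + ratio v := by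
  rw [posLetter_one_R_pow_mulVec, ratio, ratio, cons_val_zero, cons_val_one, cons_val_zero,
    add_div, mul_div_cancel_right₀ _ hv, add_comm]

lemma ratio_posLetter_one_L_pow (s : ℕ) {v : Fin 2 → ℝ} (hv : v 0 ≠ 0) :
    ratio (posLetter 1 L ^ s *ᵥ v) = 1 / (s + 1 / ratio v) := by
  rw [posLetter_one_L_pow_mulVec, ratio, ratio, one_div_div (v 0) (v 1),
    show (s : ℝ) + v 1 / v 0 = (s * v 0 + v 1) / v 0 by field_simp, one_div_div, cons_val_zero,
    cons_val_one, cons_val_zero]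

section ListProd

variable {α n R : Type*} [Fintype n] [DecidableEq n]

lemma det_prod_map_pos [CommRing R] [PartialOrder R] [IsStrictOrderedRing R]
    {m : α → Matrix n n R} (hm : ∀ c, 0 < (m c).det) (u : List α) : 0 < (u.map m).prod.det := by
  induction u with
  | nil => simp
  | cons c u ih => simpa [det_mul] using mul_pos (hm c) ih

variable [CommSemiring R] {m : α → Matrix n n R} {K K' : Set (n → R)}

lemma mapsTo_prod_map (hK : ∀ c, MapsTo (m c *ᵥ ·) K K) (u : List α) :
    MapsTo ((u.map m).prod *ᵥ ·) K K := by
  induction u with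
  | nil => exact fun v hv => by simpa using hv
  | cons c u ih => exact fun v hv => by simpa [← mulVec_mulVec] using hK c (ih hv)

lemma mapsTo_prod_map_of_mem (hK : ∀ c, MapsTo (m c *ᵥ ·) K K)
    (hK' : ∀ c, MapsTo (m c *ᵥ ·) K' K') {c₀ : α} (hc₀ : MapsTo (m c₀ *ᵥ ·) K K') {u : List α}
    (hu : c₀ ∈ u) : MapsTo ((u.map m).prod *ᵥ ·) K K' := by
  induction u with
  | nil => simp at hu
  | cons c u ih =>
    intro v hv
    dsimp only
    rw [List.map_cons, List.prod_cons, ← mulVec_mulVec]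
    by_cases hu' : c₀ ∈ u
    · exact hK' c (ih hu' hv)
    · obtain rfl : c = c₀ := by simpa [hu', eq_comm] using hu
      exact hc₀ (mapsTo_prod_map hK u hv)

end ListProd

def posQuadrant : Set (Fin 2 → ℝ) := {v | 0 < v 0 ∧ 0 ≤ v 1}

def openPosQuadrant : Set (Fin 2 → ℝ) := {v | 0 < v 0 ∧ 0 < v 1}

/-- Under `ratio`, this is the arc `[1/(1-q), ∞] ∪ (-∞, 0)` of the projective line. -/
def flatCone (q : ℝ) : Set (Fin 2 → ℝ) := {v | 0 < v 0 ∧ v 1 ≤ (1 - q) * v 0}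

def openFourthQuadrant : Set (Fin 2 → ℝ) := {v | 0 < v 0 ∧ v 1 < 0}

/-- Under `ratio`, this is the arc `[∞, -(1-q)/q)` of the projective line. -/
def sharpCone (q : ℝ) : Set (Fin 2 → ℝ) := {v | v 1 ≤ 0 ∧ 0 < q * v 0 + (1 - q) * v 1}

section Cones

variable (hq0 : 0 < q)
include hq0

lemma posLetter_mapsTo_posQuadrant (c : Letter) :
    MapsTo (posLetter q c *ᵥ ·) posQuadrant posQuadrant := by
  rintro v ⟨h0, h1⟩
  cases c <;> simp only [posQuadrant, mem_ofPred_eq, posLetter_R_mulVec, posLetter_L_mulVec,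
    cons_val_zero, cons_val_one]
  · exact ⟨by positivity, h1⟩
  · exact ⟨h0, by positivity⟩

lemma posLetter_mapsTo_openPosQuadrant (c : Letter) :
    MapsTo (posLetter q c *ᵥ ·) openPosQuadrant openPosQuadrant := by
  rintro v ⟨h0, h1⟩
  cases c <;> simp only [openPosQuadrant, mem_ofPred_eq, posLetter_R_mulVec, posLetter_L_mulVec,
    cons_val_zero, cons_val_one]
  · exact ⟨by positivity, h1⟩
  · exact ⟨h0, by positivity⟩

lemma posLetter_L_mapsTo : MapsTo (posLetter q L *ᵥ ·) posQuadrant openPosQuadrant := by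
  rintro v ⟨h0, h1⟩
  simp only [openPosQuadrant, mem_ofPred_eq, posLetter_L_mulVec, cons_val_zero, cons_val_one]
  exact ⟨h0, by positivity⟩

lemma negLetter_mapsTo_openFourthQuadrant (c : Letter) :
    MapsTo (negLetter q c *ᵥ ·) openFourthQuadrant openFourthQuadrant := by
  rintro v ⟨h0, h1⟩
  cases c <;> simp only [openFourthQuadrant, mem_ofPred_eq, negLetter_R_mulVec,
    negLetter_L_mulVec, cons_val_zero, cons_val_one]
  · exact ⟨mul_pos (inv_pos.2 hq0) (by linarith), h1⟩
  · exact ⟨h0, mul_neg_of_pos_of_neg hq0 (by linarith)⟩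

lemma negLetter_L_mapsTo : MapsTo (negLetter q L *ᵥ ·) (flatCone q) openFourthQuadrant := by
  rintro v ⟨h0, h1⟩
  simp only [openFourthQuadrant, mem_ofPred_eq, negLetter_L_mulVec, cons_val_zero, cons_val_one]
  exact ⟨h0, mul_neg_of_pos_of_neg hq0 (by nlinarith)⟩

variable (hq1 : q ≤ 1)
include hq1

lemma negLetter_mapsTo_flatCone (c : Letter) :
    MapsTo (negLetter q c *ᵥ ·) (flatCone q) (flatCone q) := by
  rintro v ⟨h0, h1⟩
  have hv : 0 < v 0 - v 1 := by nlinarith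
  cases c <;> simp only [flatCone, mem_ofPred_eq, negLetter_R_mulVec, negLetter_L_mulVec,
    cons_val_zero, cons_val_one]
  · refine ⟨by positivity, ?_⟩
    have : (1 - q) * (q⁻¹ * (v 0 - v 1)) - v 1 = q⁻¹ * ((1 - q) * v 0 - v 1) := by
      field_simp; ring
    nlinarith [mul_nonneg (inv_nonneg.2 hq0.le) (sub_nonneg.2 h1)]
  · exact ⟨h0, by nlinarith⟩

lemma negLetter_mapsTo_sharpCone (c : Letter) :
    MapsTo (negLetter q c *ᵥ ·) (sharpCone q) (sharpCone q) := by
  rintro v ⟨h1, h⟩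
  have h0 : 0 < v 0 := by nlinarith
  cases c <;> simp only [sharpCone, mem_ofPred_eq, negLetter_R_mulVec, negLetter_L_mulVec,
    cons_val_zero, cons_val_one]
  · refine ⟨h1, ?_⟩
    have : q * (q⁻¹ * (v 0 - v 1)) + (1 - q) * v 1 = v 0 - q * v 1 := by field_simp; ring
    nlinarith
  · refine ⟨by nlinarith, ?_⟩
    have : q * v 0 + (1 - q) * (q * (v 1 - v 0)) = q * (q * v 0 + (1 - q) * v 1) := by ring
    rw [this]; positivity

end Cones

/-- Lexicographic order with `L < R` on words continued by `R R R ⋯`. -/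
inductive Precedes : List Letter → List Letter → Prop
  | L_R (u v : List Letter) : Precedes (L :: u) (R :: v)
  | L_nil (u : List Letter) : Precedes (L :: u) []
  | R_nil {u : List Letter} : Precedes u [] → Precedes (R :: u) []
  | cons (c : Letter) {u v : List Letter} : Precedes u v → Precedes (c :: u) (c :: v)

lemma getLast?_ne_some_of_cons {α : Type*} {a b : α} {l : List α}
    (h : (a :: l).getLast? ≠ some b) : l.getLast? ≠ some b :=
  fun h' => h (by simp [List.getLast?_cons, h'])

namespace Precedes

lemma nil_of_ne_nil {u : List Letter} (hu : u ≠ []) (h : u.getLast? ≠ some R) :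
    Precedes u [] := by
  induction u with
  | nil => exact absurd rfl hu
  | cons c u ih =>
    cases c with
    | L => exact L_nil u
    | R =>
      rcases eq_or_ne u [] with rfl | hne
      · simp at h
      · exact R_nil (ih hne (getLast?_ne_some_of_cons h))

lemma trichotomy {u v : List Letter} (hu : u.getLast? ≠ some R) (hv : v.getLast? ≠ some R) :
    Precedes u v ∨ Precedes v u ∨ u = v := by
  induction u generalizing v with
  | nil =>
    rcases eq_or_ne v [] with rfl | hne
    · exact .inr (.inr rfl)
    · exact .inr (.inl (nil_of_ne_nil hne hv))
  | cons c u ih =>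
    cases v with
    | nil => exact .inl (nil_of_ne_nil (List.cons_ne_nil c u) hu)
    | cons d v =>
      by_cases hcd : c = d
      · subst hcd
        rcases ih (getLast?_ne_some_of_cons hu) (getLast?_ne_some_of_cons hv) with h | h | rfl
        · exact .inl (cons c h)
        · exact .inr (.inl (cons c h))
        · exact .inr (.inr rfl)
      · cases c <;> cases d <;> first
          | exact absurd rfl hcd | exact .inl (L_R u v) | exact .inr (.inl (L_R v u))

theorem wedge_prod_posLetter_neg (hq0 : 0 < q) (hq1 : q ≤ 1) {u v : List Letter}
    (h : Precedes u v) :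
    wedge ((u.map (posLetter q)).prod *ᵥ ![1, 0]) ((v.map (posLetter q)).prod *ᵥ ![1, 1 - q])
      < 0 := by
  have hinf (w : List Letter) : (w.map (posLetter q)).prod *ᵥ ![1, 0] ∈ posQuadrant :=
    mapsTo_prod_map (posLetter_mapsTo_posQuadrant hq0) w (by simp [posQuadrant])
  have hflat (w : List Letter) : (w.map (posLetter q)).prod *ᵥ ![1, 1 - q] ∈ posQuadrant :=
    mapsTo_prod_map (posLetter_mapsTo_posQuadrant hq0) w (by simp [posQuadrant, hq1])
  induction h with
  | L_R u v =>
    obtain ⟨a0, a1⟩ := hinf u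
    obtain ⟨b0, b1⟩ := hflat v
    simp only [List.map_cons, List.prod_cons, ← mulVec_mulVec, posLetter_L_mulVec,
      posLetter_R_mulVec, wedge, cons_val_zero, cons_val_one]
    generalize (u.map (posLetter q)).prod *ᵥ ![1, 0] = a at *
    generalize (v.map (posLetter q)).prod *ᵥ ![1, 1 - q] = b at *
    have key : a 0 * b 1 - (a 0 + q⁻¹ * a 1) * (q * b 0 + b 1)
        = -(q * a 0 * b 0) - a 1 * b 0 - q⁻¹ * a 1 * b 1 := by
      field_simp; ring
    have : 0 < q * a 0 * b 0 := by positivity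
    have : 0 ≤ a 1 * b 0 := by positivity
    have : 0 ≤ q⁻¹ * a 1 * b 1 := by positivity
    linarith
  | L_nil u =>
    obtain ⟨a0, a1⟩ := hinf u
    simp only [List.map_cons, List.prod_cons, List.map_nil, List.prod_nil, one_mulVec,
      ← mulVec_mulVec, posLetter_L_mulVec, wedge, cons_val_zero, cons_val_one]
    generalize (u.map (posLetter q)).prod *ᵥ ![1, 0] = a at *
    have : 0 ≤ q⁻¹ * a 1 := by positivity
    nlinarith
  | R_nil _ ih =>
    have hfix : posLetter q R *ᵥ ![1, 1 - q] = ![1, 1 - q] := by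
      rw [posLetter_R_mulVec]; simp
    simp only [List.map_cons, List.prod_cons, List.map_nil, List.prod_nil, one_mulVec,
      ← mulVec_mulVec] at ih ⊢
    rw [← hfix, wedge_mulVec]
    exact mul_neg_of_pos_of_neg (det_posLetter_pos hq0 R) ih
  | cons c _ ih =>
    simp only [List.map_cons, List.prod_cons, ← mulVec_mulVec, wedge_mulVec]
    exact mul_neg_of_pos_of_neg (det_posLetter_pos hq0 c) ih

theorem wedge_prod_negLetter_neg (hq0 : 0 < q) (hq1 : q ≤ 1) {u v : List Letter}
    (h : Precedes v u) :
    wedge ((u.map (negLetter q)).prod *ᵥ ![1, 0]) ((v.map (negLetter q)).prod *ᵥ ![1, 1 - q])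
      < 0 := by
  have hinf (w : List Letter) : (w.map (negLetter q)).prod *ᵥ ![1, 0] ∈ sharpCone q :=
    mapsTo_prod_map (negLetter_mapsTo_sharpCone hq0 hq1) w (by simp [sharpCone, hq0])
  have hflat (w : List Letter) : (w.map (negLetter q)).prod *ᵥ ![1, 1 - q] ∈ flatCone q :=
    mapsTo_prod_map (negLetter_mapsTo_flatCone hq0 hq1) w (by simp [flatCone])
  induction h with
  | L_R v u =>
    obtain ⟨a1, ha⟩ := hinf u
    obtain ⟨b0, b1⟩ := hflat v
    simp only [List.map_cons, List.prod_cons, ← mulVec_mulVec, negLetter_L_mulVec,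
      negLetter_R_mulVec, wedge, cons_val_zero, cons_val_one]
    generalize (u.map (negLetter q)).prod *ᵥ ![1, 0] = a at *
    generalize (v.map (negLetter q)).prod *ᵥ ![1, 1 - q] = b at *
    have ha0 : 0 < a 0 := by nlinarith
    have key : q⁻¹ * (a 0 - a 1) * (q * (b 1 - b 0)) - a 1 * b 0
        = (a 0 - a 1) * (b 1 - (1 - q) * b 0) - b 0 * (q * a 0 + (1 - q) * a 1) := by
      field_simp; ring
    rw [key]
    nlinarith [mul_nonneg (sub_nonneg.2 (a1.trans ha0.le)) (sub_nonneg.2 b1), mul_pos b0 ha]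
  | L_nil v =>
    obtain ⟨b0, b1⟩ := hflat v
    simp only [List.map_cons, List.prod_cons, List.map_nil, List.prod_nil, one_mulVec,
      ← mulVec_mulVec, negLetter_L_mulVec, wedge, cons_val_zero, cons_val_one, one_mul, zero_mul,
      sub_zero]
    exact mul_neg_of_pos_of_neg hq0 (by nlinarith)
  | R_nil _ ih =>
    simpa only [List.map_cons, List.prod_cons, List.map_nil, List.prod_nil, one_mulVec,
      ← mulVec_mulVec, negLetter_R_mulVec, wedge, cons_val_zero, cons_val_one, one_mul, zero_mul,
      sub_zero] using ih
  | cons c _ ih =>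
    simp only [List.map_cons, List.prod_cons, ← mulVec_mulVec, wedge_mulVec]
    exact mul_neg_of_pos_of_neg (det_negLetter_pos hq0 c) ih

end Precedes

lemma cfVal_of_le (a : ℕ → ℤ) {last i : ℕ} (h : last ≤ i) : cfVal a last i = a i := by
  rw [cfVal, if_pos h]

lemma cfVal_of_lt (a : ℕ → ℤ) {last i : ℕ} (h : i < last) :
    cfVal a last i = a i + 1 / cfVal a last (i + 1) := by
  rw [cfVal, if_neg (by omega)]

lemma cfVal_add_two (a : ℕ → ℤ) (last i : ℕ) :
    cfVal a (last + 2) (i + 2) = cfVal (fun j => a (j + 2)) last i := by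
  induction h : last - i generalizing i with
  | zero => rw [cfVal_of_le _ (by omega), cfVal_of_le _ (by omega)]
  | succ d ih =>
    rw [cfVal_of_lt a (show i + 2 < last + 2 by omega),
      cfVal_of_lt (fun j => a (j + 2)) (show i < last by omega), ← ih (i + 1) (by omega)]

lemma cfVal_neg (a : ℕ → ℤ) (last i : ℕ) : cfVal (-a) last i = -cfVal a last i := by
  induction h : last - i generalizing i with
  | zero => simp [cfVal_of_le _ (show last ≤ i by omega)]
  | succ d ih =>
    rw [cfVal_of_lt (-a) (show i < last by omega), cfVal_of_lt a (show i < last by omega),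
      ih (i + 1) (by omega), Pi.neg_apply, Int.cast_neg, one_div_neg_eq_neg_one_div, neg_add]

lemma cfVal_two (a : ℕ → ℤ) : cfVal a 2 1 = a 1 + 1 / a 2 := by
  rw [cfVal_of_lt a (show 1 < 2 by omega), cfVal_of_le a (show 2 ≤ 1 + 1 by omega)]

lemma cfVal_two_mul_succ (a : ℕ → ℤ) {n : ℕ} (hn : 1 ≤ n) :
    cfVal a (2 * (n + 1)) 1 = a 1 + 1 / (a 2 + 1 / cfVal (fun j => a (j + 2)) (2 * n) 1) := by
  have tail : cfVal a (2 * (n + 1)) (1 + 1 + 1) = cfVal (fun j => a (j + 2)) (2 * n) 1 :=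
    cfVal_add_two a (2 * n) 1
  rw [cfVal_of_lt a (show 1 < 2 * (n + 1) by omega),
    cfVal_of_lt a (show 1 + 1 < 2 * (n + 1) by omega), tail]

def IsPosForm (n : ℕ) (a : ℕ → ℤ) : Prop :=
  1 ≤ n ∧ 0 ≤ a 1 ∧ ∀ i, 2 ≤ i → i ≤ 2 * n → 1 ≤ a i

lemma isEvenForm_iff {n : ℕ} {a : ℕ → ℤ} :
    IsEvenForm n a ↔ IsPosForm n a ∨ IsPosForm n (-a) := by
  simp only [IsEvenForm, IsPosForm, Pi.neg_apply]
  constructor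
  · rintro ⟨hn, ⟨h1, h⟩ | ⟨h1, h⟩⟩
    · exact .inl ⟨hn, h1, h⟩
    · exact .inr ⟨hn, by omega, fun i hi hi' => by have := h i hi hi'; omega⟩
  · rintro (⟨hn, h1, h⟩ | ⟨hn, h1, h⟩)
    · exact ⟨hn, .inl ⟨h1, h⟩⟩
    · exact ⟨hn, .inr ⟨by omega, fun i hi hi' => by have := h i hi hi'; omega⟩⟩

def word (a : ℕ → ℤ) : ℕ → List Letter
  | 0 => []
  | n + 1 => List.replicate (a 1).toNat R ++ List.replicate (a 2).toNat L ++
      word (fun i => a (i + 2)) n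

lemma zpow_eq_pow_toNat {M : Type*} [DivInvMonoid M] (x : M) {z : ℤ} (hz : 0 ≤ z) :
    x ^ z = x ^ z.toNat := by
  conv_lhs => rw [← Int.toNat_of_nonneg hz]
  exact zpow_natCast x z.toNat

lemma zpow_eq_inv_pow_toNat {m R : Type*} [Fintype m] [DecidableEq m] [CommRing R]
    (A : Matrix m m R) {z : ℤ} (hz : z ≤ 0) : A ^ z = A⁻¹ ^ (-z).toNat := by
  conv_lhs => rw [← neg_neg z, ← Int.toNat_of_nonneg (neg_nonneg.2 hz)]
  rw [zpow_neg_natCast, inv_pow']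

lemma betaMat_two (a : ℕ → ℤ) : betaMat q a 2 = sig1 q ^ (-a 1) * sig2 q ^ a 2 := by
  simp [betaMat]

lemma betaMat_add_two (a : ℕ → ℤ) (k : ℕ) :
    betaMat q a (k + 2) = betaMat q a 2 * betaMat q (fun i => a (i + 2)) k := by
  induction k with
  | zero => simp [betaMat]
  | succ k ih =>
    rw [betaMat.eq_2 q a (k + 2), betaMat.eq_2 _ _ k, ih, mul_assoc,
      show (k + 2 + 1) % 2 = (k + 1) % 2 by omega]

lemma betaMat_eq_prod_posLetter (hq : q ≠ 0) {n : ℕ} {a : ℕ → ℤ}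
    (ha : ∀ i, 1 ≤ i → i ≤ 2 * n → 0 ≤ a i) :
    betaMat q a (2 * n) = ((word a n).map (posLetter q)).prod := by
  induction n generalizing a with
  | zero => rfl
  | succ n ih =>
    rw [show 2 * (n + 1) = 2 * n + 2 by ring, betaMat_add_two, betaMat_two,
      ih fun i hi hi' => ha (i + 2) (by omega) (by omega), word]
    simp only [List.map_append, List.prod_append, List.map_replicate, List.prod_replicate,
      mul_assoc]
    rw [zpow_eq_inv_pow_toNat _ (neg_nonpos.2 (ha 1 le_rfl (by omega))), neg_neg, inv_sig1 hq,
      zpow_eq_pow_toNat _ (ha 2 (by omega) (by omega))]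
    rfl

lemma betaMat_eq_prod_negLetter (hq : q ≠ 0) {n : ℕ} {a : ℕ → ℤ}
    (ha : ∀ i, 1 ≤ i → i ≤ 2 * n → a i ≤ 0) :
    betaMat q a (2 * n) = ((word (-a) n).map (negLetter q)).prod := by
  induction n generalizing a with
  | zero => rfl
  | succ n ih =>
    rw [show 2 * (n + 1) = 2 * n + 2 by ring, betaMat_add_two, betaMat_two,
      ih fun i hi hi' => ha (i + 2) (by omega) (by omega), word]
    simp only [List.map_append, List.prod_append, List.map_replicate, List.prod_replicate,
      mul_assoc, Pi.neg_apply]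
    rw [zpow_eq_pow_toNat _ (neg_nonneg.2 (ha 1 le_rfl (by omega))),
      zpow_eq_inv_pow_toNat _ (ha 2 (by omega) (by omega)), inv_sig2 hq]
    rfl

namespace IsPosForm

variable {n m : ℕ} {a b : ℕ → ℤ}

lemma nonneg (h : IsPosForm n a) {i : ℕ} (hi : 1 ≤ i) (hi' : i ≤ 2 * n) : 0 ≤ a i := by
  rcases Nat.lt_or_ge i 2 with hi2 | hi2
  · obtain rfl : i = 1 := by omega
    exact h.2.1
  · linarith [h.2.2 i hi2 hi']

lemma natCast_toNat (h : IsPosForm n a) {i : ℕ} (hi : 1 ≤ i) (hi' : i ≤ 2 * n) :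
    ((a i).toNat : ℝ) = a i := by
  exact_mod_cast Int.toNat_of_nonneg (h.nonneg hi hi')

lemma shift (h : IsPosForm (n + 1) a) (hn : 1 ≤ n) : IsPosForm n (fun i => a (i + 2)) :=
  ⟨hn, (h.nonneg (i := 3) (by omega) (by omega)),
    fun i hi hi' => h.2.2 (i + 2) (by omega) (by omega)⟩

lemma lt_cfVal (h : IsPosForm n a) : (a 1 : ℚ) < cfVal a (2 * n) 1 := by
  induction n, h.1 using Nat.le_induction generalizing a with
  | base =>
    have : (0 : ℚ) < a 2 := by exact_mod_cast (h.2.2 2 le_rfl le_rfl).trans_lt' one_pos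
    rw [cfVal_two]
    have : 0 < 1 / (a 2 : ℚ) := by positivity
    linarith
  | succ n hn ih =>
    have : (0 : ℚ) < a 2 := by exact_mod_cast (h.2.2 2 le_rfl (by omega)).trans_lt' one_pos
    have : (1 : ℚ) ≤ a (1 + 2) := by exact_mod_cast h.2.2 (1 + 2) (by omega) (by omega)
    have := ih (h.shift hn)
    have : 0 < cfVal (fun j => a (j + 2)) (2 * n) 1 := by linarith
    have : 0 < 1 / (a 2 + 1 / cfVal (fun j => a (j + 2)) (2 * n) 1) := by positivity
    rw [cfVal_two_mul_succ a hn]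
    linarith

lemma cfVal_pos (h : IsPosForm n a) : 0 < cfVal a (2 * n) 1 := by
  have : (0 : ℚ) ≤ a 1 := by exact_mod_cast h.2.1
  linarith [h.lt_cfVal]

lemma getLast?_word (h : IsPosForm n a) : (word a n).getLast? = some L := by
  induction n, h.1 using Nat.le_induction generalizing a with
  | base =>
    have : (a 2).toNat ≠ 0 := by have := h.2.2 2 le_rfl le_rfl; omega
    simp [word, List.getLast?_append, List.getLast?_replicate, this]
  | succ n hn ih =>
    rw [word, List.getLast?_append, ih (h.shift hn)]
    rfl

lemma L_mem_word (h : IsPosForm n a) : L ∈ word a n :=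
  List.mem_of_getLast? h.getLast?_word

lemma betaMat_eq (hq : q ≠ 0) (h : IsPosForm n a) :
    betaMat q a (2 * n) = ((word a n).map (posLetter q)).prod :=
  betaMat_eq_prod_posLetter hq fun _ hi hi' => h.nonneg hi hi'

lemma betaMat_eq_of_neg (hq : q ≠ 0) (h : IsPosForm n (-a)) :
    betaMat q a (2 * n) = ((word (-a) n).map (negLetter q)).prod :=
  betaMat_eq_prod_negLetter hq fun _ hi hi' => neg_nonneg.1 (h.nonneg hi hi')

lemma prod_posLetter_mulVec_mem (hq : 0 < q) (h : IsPosForm n a) {v : Fin 2 → ℝ}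
    (hv : v ∈ posQuadrant) : ((word a n).map (posLetter q)).prod *ᵥ v ∈ openPosQuadrant :=
  mapsTo_prod_map_of_mem (posLetter_mapsTo_posQuadrant hq)
    (posLetter_mapsTo_openPosQuadrant hq) (posLetter_L_mapsTo hq) h.L_mem_word hv

lemma prod_negLetter_mulVec_mem (hq0 : 0 < q) (hq1 : q ≤ 1) (h : IsPosForm n a)
    {v : Fin 2 → ℝ} (hv : v ∈ flatCone q) :
    ((word a n).map (negLetter q)).prod *ᵥ v ∈ openFourthQuadrant :=
  mapsTo_prod_map_of_mem (negLetter_mapsTo_flatCone hq0 hq1)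
    (negLetter_mapsTo_openFourthQuadrant hq0) (negLetter_L_mapsTo hq0) h.L_mem_word hv

lemma ratio_prod_posLetter_one (h : IsPosForm n a) :
    ratio (((word a n).map (posLetter 1)).prod *ᵥ ![1, 0]) = cfVal a (2 * n) 1 := by
  induction n, h.1 using Nat.le_induction generalizing a with
  | base =>
    have ha2 : (0 : ℝ) < (a 2).toNat := by
      have := h.2.2 2 le_rfl le_rfl
      exact Nat.cast_pos.2 (by omega)
    simp only [word, List.map_append, List.map_replicate, List.prod_append, List.prod_replicate,
      List.map_nil, List.prod_nil, mul_one, ← mulVec_mulVec]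
    rw [posLetter_one_L_pow_mulVec, ratio_posLetter_one_R_pow _ (by simpa using ha2.ne'),
      cfVal_two]
    simp [ratio, h.natCast_toNat (i := 1) le_rfl (by omega),
      h.natCast_toNat (i := 2) (by omega) le_rfl]
  | succ n hn ih =>
    have hsh := h.shift hn
    obtain ⟨hw0, hw1⟩ := hsh.prod_posLetter_mulVec_mem one_pos (v := ![1, 0])
      (by simp [posQuadrant])
    have hx := ih hsh
    simp only [word, List.map_append, List.map_replicate, List.prod_append, List.prod_replicate,
      ← mulVec_mulVec]
    generalize ((word _ n).map (posLetter 1)).prod *ᵥ ![1, 0] = w at hw0 hw1 hx ⊢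
    have hLw : (posLetter 1 L ^ (a 2).toNat *ᵥ w) 1 ≠ 0 := by
      rw [posLetter_one_L_pow_mulVec, cons_val_one, cons_val_zero]
      positivity
    rw [ratio_posLetter_one_R_pow _ hLw, ratio_posLetter_one_L_pow _ hw0.ne', hx,
      cfVal_two_mul_succ a hn, h.natCast_toNat le_rfl (by omega),
      h.natCast_toNat (by omega) (by omega)]
    push_cast
    rfl

lemma precedes_word (ha : IsPosForm n a) (hb : IsPosForm m b)
    (hab : cfVal a (2 * n) 1 < cfVal b (2 * m) 1) : Precedes (word a n) (word b m) := by
  have hinf {k : ℕ} {c : ℕ → ℤ} (hc : IsPosForm k c) :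
      ((word c k).map (posLetter 1)).prod *ᵥ ![1, 0] ∈ openPosQuadrant :=
    hc.prod_posLetter_mulVec_mem one_pos (by simp [posQuadrant])
  rcases Precedes.trichotomy (u := word a n) (v := word b m) (by simp [ha.getLast?_word])
    (by simp [hb.getLast?_word]) with h | h | h
  · exact h
  · have hwedge := h.wedge_prod_posLetter_neg one_pos le_rfl
    rw [sub_self] at hwedge
    have := ratio_lt_ratio_of_wedge_neg (mul_pos (hinf hb).2 (hinf ha).2) hwedge
    rw [ha.ratio_prod_posLetter_one, hb.ratio_prod_posLetter_one] at this
    exact absurd hab (not_lt.2 (by exact_mod_cast this.le))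
  · have := congrArg (fun w => ratio (((w.map (posLetter 1)).prod *ᵥ ![1, 0]))) h
    simp only [ha.ratio_prod_posLetter_one, hb.ratio_prod_posLetter_one] at this
    exact absurd hab (by exact_mod_cast this.not_lt)

end IsPosForm

lemma sharpVal_eq_ratio (n : ℕ) (a : ℕ → ℤ) :
    sharpVal q n a = ratio (betaMat q a (2 * n) *ᵥ ![1, 0]) :=
  mobiusInf_eq_ratio _

lemma flatVal_eq_ratio (hq : q ≠ 1) (n : ℕ) (a : ℕ → ℤ) :
    flatVal q n a = ratio (betaMat q a (2 * n) *ᵥ ![1, 1 - q]) :=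
  mobiusAct_div_eq_ratio _ 1 (sub_ne_zero.2 hq.symm)

lemma ratio_mulVec_flat_lt_inf (hq : q < 1) {M : Matrix (Fin 2) (Fin 2) ℝ} (hM : 0 < M.det)
    (h : 0 < (M *ᵥ ![1, 1 - q]) 1 * (M *ᵥ ![1, 0]) 1) :
    ratio (M *ᵥ ![1, 1 - q]) < ratio (M *ᵥ ![1, 0]) := by
  refine ratio_lt_ratio_of_wedge_neg h ?_
  rw [wedge_mulVec]
  simp only [wedge, cons_val_zero, cons_val_one]
  nlinarith

section Values

variable (hq0 : 0 < q) (hq1 : q < 1)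
include hq0 hq1

namespace IsPosForm

variable {n m : ℕ} {a b : ℕ → ℤ}

lemma flatVal_lt_sharpVal (h : IsPosForm n a) : flatVal q n a < sharpVal q n a := by
  rw [flatVal_eq_ratio hq1.ne, sharpVal_eq_ratio, h.betaMat_eq hq0.ne']
  exact ratio_mulVec_flat_lt_inf hq1 (det_prod_map_pos (det_posLetter_pos hq0) _)
    (mul_pos (h.prod_posLetter_mulVec_mem hq0 (by simp [posQuadrant, hq1.le])).2
      (h.prod_posLetter_mulVec_mem hq0 (by simp [posQuadrant])).2)

lemma flatVal_pos (h : IsPosForm n a) : 0 < flatVal q n a := by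
  rw [flatVal_eq_ratio hq1.ne, h.betaMat_eq hq0.ne']
  obtain ⟨h0, h1⟩ := h.prod_posLetter_mulVec_mem hq0 (v := ![1, 1 - q])
    (by simp [posQuadrant, hq1.le])
  exact div_pos h0 h1

lemma sharpVal_lt_flatVal (ha : IsPosForm n a) (hb : IsPosForm m b)
    (hab : cfVal a (2 * n) 1 < cfVal b (2 * m) 1) : sharpVal q n a < flatVal q m b := by
  rw [sharpVal_eq_ratio, flatVal_eq_ratio hq1.ne, ha.betaMat_eq hq0.ne', hb.betaMat_eq hq0.ne']
  exact ratio_lt_ratio_of_wedge_neg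
    (mul_pos (ha.prod_posLetter_mulVec_mem hq0 (by simp [posQuadrant])).2
      (hb.prod_posLetter_mulVec_mem hq0 (by simp [posQuadrant, hq1.le])).2)
    ((ha.precedes_word hb hab).wedge_prod_posLetter_neg hq0 hq1.le)

lemma flatVal_lt_sharpVal_of_neg (h : IsPosForm n (-a)) : flatVal q n a < sharpVal q n a := by
  rw [flatVal_eq_ratio hq1.ne, sharpVal_eq_ratio, h.betaMat_eq_of_neg hq0.ne']
  exact ratio_mulVec_flat_lt_inf hq1 (det_prod_map_pos (det_negLetter_pos hq0) _)
    (mul_pos_of_neg_of_neg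
      (h.prod_negLetter_mulVec_mem hq0 hq1.le (by simp [flatCone])).2
      (h.prod_negLetter_mulVec_mem hq0 hq1.le (by simp [flatCone, hq1.le])).2)

lemma sharpVal_lt_of_neg (h : IsPosForm n (-a)) : sharpVal q n a < -((1 - q) / q) := by
  rw [sharpVal_eq_ratio, h.betaMat_eq_of_neg hq0.ne']
  have hw1 := (h.prod_negLetter_mulVec_mem hq0 hq1.le (v := ![1, 0])
    (by simp [flatCone, hq1.le])).2
  have hw : ((word (-a) n).map (negLetter q)).prod *ᵥ ![1, 0] ∈ sharpCone q :=
    mapsTo_prod_map (negLetter_mapsTo_sharpCone hq0 hq1.le) _ (by simp [sharpCone, hq0])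
  generalize ((word (-a) n).map (negLetter q)).prod *ᵥ ![1, 0] = w at hw hw1 ⊢
  obtain ⟨-, hw⟩ := hw
  rw [ratio, div_lt_iff_of_neg hw1, show -((1 - q) / q) * w 1 = -((1 - q) * w 1) / q by ring,
    div_lt_iff₀ hq0]
  linarith

lemma sharpVal_lt_flatVal_of_neg (ha : IsPosForm n (-a)) (hb : IsPosForm m (-b))
    (hab : cfVal a (2 * n) 1 < cfVal b (2 * m) 1) : sharpVal q n a < flatVal q m b := by
  have hba : cfVal (-b) (2 * m) 1 < cfVal (-a) (2 * n) 1 := by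
    rw [cfVal_neg, cfVal_neg]; exact neg_lt_neg hab
  rw [sharpVal_eq_ratio, flatVal_eq_ratio hq1.ne, ha.betaMat_eq_of_neg hq0.ne',
    hb.betaMat_eq_of_neg hq0.ne']
  exact ratio_lt_ratio_of_wedge_neg
    (mul_pos_of_neg_of_neg
      (ha.prod_negLetter_mulVec_mem hq0 hq1.le (by simp [flatCone, hq1.le])).2
      (hb.prod_negLetter_mulVec_mem hq0 hq1.le (by simp [flatCone])).2)
    ((hb.precedes_word ha hba).wedge_prod_negLetter_neg hq0 hq1.le)

end IsPosForm

end Values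

section ZeroExpansion

variable {a : ℕ → ℤ} (ha1 : a 1 = -1) (ha2 : a 2 = 1)
include ha1 ha2

lemma betaMat_of_zero_expansion : betaMat q a (2 * 1) = !![0, -(q⁻¹ * q⁻¹); 1, q⁻¹] := by
  rw [betaMat_two, ha1, ha2]
  simp [sig1, sig2]

lemma sharpVal_of_zero_expansion : sharpVal q 1 a = 0 := by
  simp [sharpVal, mobiusInf, betaMat_of_zero_expansion ha1 ha2]

lemma flatVal_of_zero_expansion (hq0 : q ≠ 0) (hq1 : q ≠ 1) :
    flatVal q 1 a = -((1 - q) / q) := by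
  have : 1 - q ≠ 0 := sub_ne_zero.2 hq1.symm
  rw [flatVal, betaMat_of_zero_expansion ha1 ha2, mobiusAct]
  simp only [of_apply, cons_val', cons_val_zero, cons_val_one, cons_val_fin_one]
  field_simp
  ring

end ZeroExpansion

lemma _root_.IsECFExp.trichotomy {n : ℕ} {a : ℕ → ℤ} {x : ℚ} (h : IsECFExp n a x) :
    (IsPosForm n a ∧ cfVal a (2 * n) 1 = x ∧ 0 < x) ∨ (n = 1 ∧ a 1 = -1 ∧ a 2 = 1 ∧ x = 0) ∨
      (IsPosForm n (-a) ∧ cfVal a (2 * n) 1 = x ∧ x < 0) := by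
  rcases h with ⟨-, hform, rfl⟩ | ⟨rfl, rfl, h1, h2⟩
  · rcases isEvenForm_iff.1 hform with hpos | hneg
    · exact .inl ⟨hpos, rfl, hpos.cfVal_pos⟩
    · refine .inr (.inr ⟨hneg, rfl, ?_⟩)
      simpa [cfVal_neg] using hneg.cfVal_pos
  · exact .inr (.inl ⟨rfl, h1, h2, rfl⟩)

section Interleaving

variable (hq0 : 0 < q) (hq1 : q < 1)
include hq0 hq1

lemma flatVal_lt_sharpVal {n : ℕ} {a : ℕ → ℤ} {x : ℚ} (h : IsECFExp n a x) :
    flatVal q n a < sharpVal q n a := by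
  rcases h.trichotomy with ⟨hpos, -⟩ | ⟨rfl, h1, h2, -⟩ | ⟨hneg, -⟩
  · exact hpos.flatVal_lt_sharpVal hq0 hq1
  · rw [flatVal_of_zero_expansion h1 h2 hq0.ne' hq1.ne, sharpVal_of_zero_expansion h1 h2]
    exact neg_neg_of_pos (div_pos (sub_pos.2 hq1) hq0)
  · exact hneg.flatVal_lt_sharpVal_of_neg hq0 hq1

lemma sharpVal_lt_flatVal {x y : ℚ} (hxy : x < y) {nx ny : ℕ} {ax ay : ℕ → ℤ}
    (hx : IsECFExp nx ax x) (hy : IsECFExp ny ay y) : sharpVal q nx ax < flatVal q ny ay := by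
  have hzero : -((1 - q) / q) < 0 := neg_neg_of_pos (div_pos (sub_pos.2 hq1) hq0)
  rcases hx.trichotomy with ⟨hpx, rfl, hx0⟩ | ⟨rfl, hx1, hx2, rfl⟩ | ⟨hnx, rfl, hx0⟩ <;>
    rcases hy.trichotomy with ⟨hpy, rfl, hy0⟩ | ⟨rfl, hy1, hy2, rfl⟩ | ⟨hny, rfl, hy0⟩
  · exact hpx.sharpVal_lt_flatVal hq0 hq1 hpy hxy
  · exact absurd hxy hx0.not_gt
  · exact absurd hxy (hy0.trans hx0).not_gt
  · rw [sharpVal_of_zero_expansion hx1 hx2]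
    exact hpy.flatVal_pos hq0 hq1
  · exact absurd hxy (lt_irrefl 0)
  · exact absurd hxy hy0.not_gt
  · exact (hnx.sharpVal_lt_of_neg hq0 hq1).trans (hzero.trans (hpy.flatVal_pos hq0 hq1))
  · rw [flatVal_of_zero_expansion hy1 hy2 hq0.ne' hq1.ne]
    exact hnx.sharpVal_lt_of_neg hq0 hq1
  · exact hnx.sharpVal_lt_flatVal_of_neg hq0 hq1 hny hxy

end Interleaving

end QDeform

/-- order interleaving of left and right q-deformed rationals:
for 0 < q < 1 and rationals x < y (with even continued fraction expansion data
(nx, ax) and (ny, ay) respectively), [x]♭_q < [x]♯_q < [y]♭_q < [y]♯_q. -/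
theorem qdeform_order_interleaving (q : ℝ) (hq0 : 0 < q) (hq1 : q < 1)
    (x y : ℚ) (hxy : x < y)
    (nx : ℕ) (ax : ℕ → ℤ) (hx : IsECFExp nx ax x)
    (ny : ℕ) (ay : ℕ → ℤ) (hy : IsECFExp ny ay y) :
    flatVal q nx ax < sharpVal q nx ax ∧
    sharpVal q nx ax < flatVal q ny ay ∧
    flatVal q ny ay < sharpVal q ny ay :=
  ⟨QDeform.flatVal_lt_sharpVal hq0 hq1 hx, QDeform.sharpVal_lt_flatVal hq0 hq1 hxy hx hy,
    QDeform.flatVal_lt_sharpVal hq0 hq1 hy⟩
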